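/- Let 0 < s < δ and let a ≥ b be real numbers. Suppose Ψ is C¹ on a neighborhood of the closed annulus Ā = {x ∈ ℝ² : s ≤ |x| ≤ δ}, with Ψ(x) ≥ a whenever |x| = s and Ψ(x) ≤ b whenever |x| = δ. Then ∫_A |∇Ψ(x)|² dx ≥ 4π(a − b)²/(log δ² − log s²), where A = {x ∈ ℝ² : s < |x| < δ}. -/

import Mathlib

open Real MeasureTheory Set

noncomputable def Tmap : (ℝ × ℝ) ≃ᵐ EuclideanSpace ℝ (Fin 2) :=
  (MeasurableEquiv.finTwoArrow).symm.trans ((MeasurableEquiv.toLp 2 (Fin 2 → ℝ)).symm).symm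

lemma Tmap_apply (p : ℝ × ℝ) (i : Fin 2) : Tmap p i = ![p.1, p.2] i := by
  simp [Tmap, MeasurableEquiv.toLp_apply, MeasurableEquiv.finTwoArrow]

lemma Tmap_mp : MeasurePreserving Tmap volume volume :=
  ((EuclideanSpace.volume_preserving_symm_measurableEquiv_toLp (Fin 2)).symm).comp
    (volume_preserving_finTwoArrow ℝ).symm

lemma Tmap_norm (p : ℝ × ℝ) : ‖Tmap p‖ = Real.sqrt (p.1 ^ 2 + p.2 ^ 2) := by
  rw [EuclideanSpace.norm_eq]
  congr 1
  simp [Fin.sum_univ_two, Tmap_apply, sq_abs]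

lemma Tmap_smul (r : ℝ) (p : ℝ × ℝ) : Tmap (r * p.1, r * p.2) = r • Tmap p := by
  ext i
  fin_cases i <;> simp [Tmap_apply]

lemma Tmap_cont : Continuous (Tmap : ℝ × ℝ → EuclideanSpace ℝ (Fin 2)) := by
  have : Continuous fun p : ℝ × ℝ => (WithLp.toLp 2 (fun i => ![p.1, p.2] i) : EuclideanSpace ℝ (Fin 2)) := by
    apply (PiLp.continuousLinearEquiv 2 ℝ (fun _ : Fin 2 => ℝ)).symm.continuous.comp
    refine continuous_pi fun i => ?_
    fin_cases i
    · exact continuous_fst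
    · exact continuous_snd
  have he : (Tmap : ℝ × ℝ → EuclideanSpace ℝ (Fin 2)) =
      fun p : ℝ × ℝ => (WithLp.toLp 2 (fun i => ![p.1, p.2] i) : EuclideanSpace ℝ (Fin 2)) :=
    funext fun p => by ext i; exact Tmap_apply p i
  rw [he]; exact this

lemma radial (s δ a b : ℝ) (hs : 0 < s) (hsδ : s < δ) (hab : b < a)
    (Ψ : EuclideanSpace ℝ (Fin 2) → ℝ) (U : Set (EuclideanSpace ℝ (Fin 2)))
    (hU : IsOpen U)
    (hsub : {x : EuclideanSpace ℝ (Fin 2) | s ≤ ‖x‖ ∧ ‖x‖ ≤ δ} ⊆ U)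
    (hC1 : ContDiffOn ℝ 1 Ψ U)
    (hinner : ∀ x : EuclideanSpace ℝ (Fin 2), ‖x‖ = s → a ≤ Ψ x)
    (houter : ∀ x : EuclideanSpace ℝ (Fin 2), ‖x‖ = δ → Ψ x ≤ b)
    (u : EuclideanSpace ℝ (Fin 2)) (hu : ‖u‖ = 1) :
    (a - b) ^ 2 / Real.log (δ / s) ≤ ∫ r in Ioo s δ, r * ‖gradient Ψ (r • u)‖ ^ 2 := by
  have hδ : 0 < δ := hs.trans hsδ
  have hL : 0 < Real.log (δ / s) := Real.log_pos (by rw [lt_div_iff₀ hs]; linarith)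
  have hnorm : ∀ r ∈ Icc s δ, ‖r • u‖ = r := by
    intro r hr
    rw [norm_smul, hu, mul_one, Real.norm_eq_abs, abs_of_pos (lt_of_lt_of_le hs hr.1)]
  have hmem : ∀ r ∈ Icc s δ, r • u ∈ U := by
    intro r hr
    exact hsub ⟨by rw [hnorm r hr]; exact hr.1, by rw [hnorm r hr]; exact hr.2⟩
  have hgradc : ContinuousOn (gradient Ψ) U := by
    have h1 := hC1.continuousOn_fderiv_of_isOpen hU le_rfl
    exact ((InnerProductSpace.toDual ℝ
      (EuclideanSpace ℝ (Fin 2))).symm.continuous.comp_continuousOn h1)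
  set f : ℝ → ℝ := fun r => Ψ (r • u) with hf
  set f' : ℝ → ℝ := fun r => (inner ℝ (gradient Ψ (r • u)) u : ℝ) with hf'
  set g : ℝ → ℝ := fun r => ‖gradient Ψ (r • u)‖ with hg
  have hderiv : ∀ r ∈ Icc s δ, HasDerivAt f (f' r) r := by
    intro r hr
    have hd : DifferentiableAt ℝ Ψ (r • u) :=
      (hC1.contDiffAt (hU.mem_nhds (hmem r hr))).differentiableAt one_ne_zero
    have h1 : HasFDerivAt Ψ ((InnerProductSpace.toDual ℝ _) (gradient Ψ (r • u))) (r • u) :=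
      hd.hasGradientAt.hasFDerivAt
    have h2 : HasDerivAt (fun t : ℝ => t • u) u r := by
      simpa using (hasDerivAt_id r).smul_const u
    have h3 := h1.comp_hasDerivAt r h2
    exact h3
  have hcg : ContinuousOn (fun r : ℝ => gradient Ψ (r • u)) (Icc s δ) :=
    hgradc.comp ((continuous_id.smul continuous_const).continuousOn) hmem
  have hcont' : ContinuousOn f' (Icc s δ) := hcg.inner continuousOn_const
  have hcontg : ContinuousOn g (Icc s δ) := hcg.norm
  have huIcc : uIcc s δ = Icc s δ := uIcc_of_le hsδ.le
  have hint' : IntervalIntegrable f' volume s δ :=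
    (huIcc ▸ hcont' : ContinuousOn f' (uIcc s δ)).intervalIntegrable
  have hintg : IntervalIntegrable g volume s δ :=
    (huIcc ▸ hcontg : ContinuousOn g (uIcc s δ)).intervalIntegrable
  have hintrg2 : IntervalIntegrable (fun r => r * g r ^ 2) volume s δ := by
    have : ContinuousOn (fun r => r * g r ^ 2) (Icc s δ) :=
      continuousOn_id.mul (hcontg.pow 2)
    exact (huIcc ▸ this : ContinuousOn _ (uIcc s δ)).intervalIntegrable
  have hFTC : ∫ r in s..δ, f' r = f δ - f s :=
    intervalIntegral.integral_eq_sub_of_hasDerivAt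
      (fun r hr => hderiv r (huIcc ▸ hr)) hint'
  have hfs : a ≤ f s := hinner _ (hnorm s ⟨le_rfl, hsδ.le⟩)
  have hfδ : f δ ≤ b := houter _ (hnorm δ ⟨hsδ.le, le_rfl⟩)
  set L : ℝ := Real.log (δ / s) with hLdef
  set I : ℝ := ∫ r in s..δ, r * g r ^ 2 with hI
  have hI0 : 0 ≤ I := intervalIntegral.integral_nonneg hsδ.le
    (fun r hr => mul_nonneg (hs.le.trans hr.1) (sq_nonneg _))
  -- step 1 : a - b ≤ ∫ g
  have step1 : a - b ≤ ∫ r in s..δ, g r := by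
    have hmono : ∫ r in s..δ, -f' r ≤ ∫ r in s..δ, g r := by
      apply intervalIntegral.integral_mono_on hsδ.le hint'.neg hintg
      intro r hr
      have := abs_real_inner_le_norm (gradient Ψ (r • u)) u
      rw [hu, mul_one] at this
      calc -f' r ≤ |f' r| := neg_le_abs _
        _ ≤ g r := this
    have : ∫ r in s..δ, -f' r = f s - f δ := by
      rw [intervalIntegral.integral_neg, hFTC]; ring
    linarith
  -- step 2
  set t : ℝ := L / (a - b) with ht
  have hab' : 0 < a - b := by linarith
  have htpos : 0 < t := div_pos hL hab'
  have step2 : ∫ r in s..δ, g r ≤ t / 2 * I + 1 / (2 * t) * L := by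
    have hint1r : IntervalIntegrable (fun r : ℝ => 1 / (2 * t) * (1 / r)) volume s δ := by
      apply ContinuousOn.intervalIntegrable
      apply continuousOn_const.mul
      apply continuousOn_const.div continuousOn_id
      intro r hr
      rw [huIcc] at hr
      exact ne_of_gt (lt_of_lt_of_le hs hr.1)
    have hintRHS : IntervalIntegrable
        (fun r => t / 2 * (r * g r ^ 2) + 1 / (2 * t) * (1 / r)) volume s δ :=
      (hintrg2.const_mul (t / 2)).add hint1r
    have hmono : ∫ r in s..δ, g r ≤
        ∫ r in s..δ, (t / 2 * (r * g r ^ 2) + 1 / (2 * t) * (1 / r)) := by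
      apply intervalIntegral.integral_mono_on hsδ.le hintg hintRHS
      intro r hr
      have hr0 : 0 < r := lt_of_lt_of_le hs hr.1
      have hg0 : 0 ≤ g r := norm_nonneg _
      have key : 0 ≤ t * r * (g r - 1 / (t * r)) ^ 2 := by positivity
      have htr : t * r > 0 := mul_pos htpos hr0
      have hexp : t * r * (g r - 1 / (t * r)) ^ 2
          = t * r * g r ^ 2 - 2 * g r + 1 / (t * r) := by
        field_simp
        ring
      rw [hexp] at key
      have h1r : 1 / (2 * t) * (1 / r) = (1 / (t * r)) / 2 := by
        field_simp
      rw [h1r]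
      nlinarith
    have heq : ∫ r in s..δ, (t / 2 * (r * g r ^ 2) + 1 / (2 * t) * (1 / r))
        = t / 2 * I + 1 / (2 * t) * L := by
      rw [intervalIntegral.integral_add (hintrg2.const_mul (t / 2)) hint1r,
        intervalIntegral.integral_const_mul, intervalIntegral.integral_const_mul,
        integral_one_div (by rw [huIcc]; intro h; exact absurd h.1 (not_le.mpr hs))]
    linarith [heq ▸ hmono]
  -- combine
  have hIoo : ∫ r in Ioo s δ, r * ‖gradient Ψ (r • u)‖ ^ 2 = I := by
    rw [hI, intervalIntegral.integral_of_le hsδ.le, integral_Ioc_eq_integral_Ioo]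
  rw [hIoo]
  have hcomb : a - b ≤ t / 2 * I + 1 / (2 * t) * L := le_trans step1 step2
  rw [div_le_iff₀ hL]
  rw [ht] at hcomb
  have h1 : 1 / (2 * (L / (a - b))) * L = (a - b) / 2 := by
    field_simp
  rw [h1] at hcomb
  have h2 : (a - b) / 2 ≤ L / (a - b) / 2 * I := by linarith
  have h3 : (a - b) * (a - b) ≤ L * I := by
    have h4 := mul_le_mul_of_nonneg_left h2 hab'.le
    have h5 : (a - b) * (L / (a - b) / 2 * I) = L * I / 2 := by
      field_simp
    rw [h5] at h4
    linarith
  nlinarith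

lemma grad_contOn (Ψ : EuclideanSpace ℝ (Fin 2) → ℝ) (U : Set (EuclideanSpace ℝ (Fin 2)))
    (hU : IsOpen U) (hC1 : ContDiffOn ℝ 1 Ψ U) : ContinuousOn (gradient Ψ) U :=
  ((InnerProductSpace.toDual ℝ (EuclideanSpace ℝ (Fin 2))).symm.continuous.comp_continuousOn
    (hC1.continuousOn_fderiv_of_isOpen hU le_rfl))

theorem stmt7 (s δ a b : ℝ) (hs : 0 < s) (hsδ : s < δ) (hab : b ≤ a)
    (Ψ : EuclideanSpace ℝ (Fin 2) → ℝ)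
    (hΨC1 : ∃ U : Set (EuclideanSpace ℝ (Fin 2)),
      IsOpen U ∧ {x : EuclideanSpace ℝ (Fin 2) | s ≤ ‖x‖ ∧ ‖x‖ ≤ δ} ⊆ U ∧
        ContDiffOn ℝ 1 Ψ U)
    (hinner : ∀ x : EuclideanSpace ℝ (Fin 2), ‖x‖ = s → a ≤ Ψ x)
    (houter : ∀ x : EuclideanSpace ℝ (Fin 2), ‖x‖ = δ → Ψ x ≤ b) :
    4 * Real.pi * (a - b) ^ 2 / (Real.log (δ ^ 2) - Real.log (s ^ 2)) ≤
      ∫ x in {x : EuclideanSpace ℝ (Fin 2) | s < ‖x‖ ∧ ‖x‖ < δ}, ‖gradient Ψ x‖ ^ 2 := by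
  obtain ⟨U, hU, hsub, hC1⟩ := hΨC1
  have hδ : 0 < δ := hs.trans hsδ
  set A : Set (EuclideanSpace ℝ (Fin 2)) := {x | s < ‖x‖ ∧ ‖x‖ < δ} with hA
  have hAopen : IsOpen A := by
    have : A = (fun x : EuclideanSpace ℝ (Fin 2) => ‖x‖) ⁻¹' (Ioo s δ) := rfl
    rw [this]; exact isOpen_Ioo.preimage continuous_norm
  have hAmeas : MeasurableSet A := hAopen.measurableSet
  rcases eq_or_lt_of_le hab with heq | hab'
  · subst heq
    simp only [sub_self, ne_eq, OfNat.ofNat_ne_zero, not_false_eq_true, zero_pow, mul_zero,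
      zero_div]
    exact setIntegral_nonneg hAmeas fun x _ => sq_nonneg _
  have hL : 0 < Real.log (δ / s) := Real.log_pos (by rw [lt_div_iff₀ hs]; linarith)
  have hlogeq : Real.log (δ ^ 2) - Real.log (s ^ 2) = 2 * Real.log (δ / s) := by
    rw [Real.log_pow, Real.log_pow, Real.log_div hδ.ne' hs.ne']
    push_cast; ring
  rw [hlogeq]
  set F : EuclideanSpace ℝ (Fin 2) → ℝ := fun x => ‖gradient Ψ x‖ ^ 2 with hF
  set u : ℝ → EuclideanSpace ℝ (Fin 2) := fun θ => Tmap (Real.cos θ, Real.sin θ) with hudef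
  have hu1 : ∀ θ, ‖u θ‖ = 1 := by
    intro θ
    rw [hudef]
    simp only
    rw [Tmap_norm]
    simp [Real.cos_sq_add_sin_sq]
  have hucont : Continuous u := Tmap_cont.comp (Real.continuous_cos.prodMk Real.continuous_sin)
  have hgradc : ContinuousOn (gradient Ψ) U := grad_contOn Ψ U hU hC1
  -- change of variables to polar coordinates
  have h1 : ∫ x in A, F x
      = ∫ p in polarCoord.target, p.1 • (A.indicator F) (Tmap (polarCoord.symm p)) := by
    rw [← integral_indicator hAmeas, ← Tmap_mp.integral_comp' (fun x => A.indicator F x),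
      ← integral_comp_polarCoord_symm (fun p => A.indicator F (Tmap p))]
  set S : Set (ℝ × ℝ) := Ioo s δ ×ˢ Ioo (-π) π with hS
  have hSmeas : MeasurableSet S := measurableSet_Ioo.prod measurableSet_Ioo
  set H : ℝ × ℝ → ℝ := fun p => p.1 * F (p.1 • u p.2) with hH
  have hTsm : ∀ p : ℝ × ℝ, Tmap (polarCoord.symm p) = p.1 • u p.2 := by
    intro p
    rw [polarCoord_symm_apply, hudef]
    exact Tmap_smul p.1 (Real.cos p.2, Real.sin p.2)
  have h2 : ∫ p in polarCoord.target, p.1 • (A.indicator F) (Tmap (polarCoord.symm p))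
      = ∫ p in polarCoord.target, S.indicator H p := by
    apply setIntegral_congr_fun polarCoord.open_target.measurableSet
    intro p hp
    rw [polarCoord_target] at hp
    obtain ⟨hp1, hp2⟩ := hp
    rw [mem_Ioi] at hp1
    show p.1 • A.indicator F (Tmap (polarCoord.symm p)) = S.indicator H p
    have hn : ‖p.1 • u p.2‖ = p.1 := by
      rw [norm_smul, hu1, mul_one, Real.norm_eq_abs, abs_of_pos hp1]
    rw [hTsm p]
    by_cases hr : p.1 ∈ Ioo s δ
    · rw [indicator_of_mem (by rw [hA, mem_setOf_eq, hn]; exact ⟨hr.1, hr.2⟩),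
        indicator_of_mem (by exact ⟨hr, hp2⟩)]
      simp [smul_eq_mul, hH]
    · rw [indicator_of_notMem (by rw [hA, mem_setOf_eq, hn]; exact fun h => hr ⟨h.1, h.2⟩),
        indicator_of_notMem (fun h => hr h.1)]
      simp
  have hSsub : S ⊆ polarCoord.target := by
    rw [polarCoord_target]
    exact prod_mono (fun r hr => lt_trans hs hr.1) (fun θ hθ => hθ)
  have h3 : ∫ p in polarCoord.target, S.indicator H p = ∫ p in S, H p := by
    rw [setIntegral_indicator hSmeas, inter_eq_self_of_subset_right hSsub]
  -- integrability of H on S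
  have hmapc : Continuous (fun p : ℝ × ℝ => p.1 • u p.2) :=
    continuous_fst.smul (hucont.comp continuous_snd)
  have hHint : IntegrableOn H S := by
    have hK : IsCompact (Icc s δ ×ˢ Icc (-π) π) := isCompact_Icc.prod isCompact_Icc
    have hmaps : MapsTo (fun p : ℝ × ℝ => p.1 • u p.2) (Icc s δ ×ˢ Icc (-π) π) U := by
      intro p hp
      apply hsub
      have hn : ‖p.1 • u p.2‖ = p.1 := by
        rw [norm_smul, hu1, mul_one, Real.norm_eq_abs,
          abs_of_pos (lt_of_lt_of_le hs hp.1.1)]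
      exact ⟨by rw [hn]; exact hp.1.1, by rw [hn]; exact hp.1.2⟩
    have hHc : ContinuousOn H (Icc s δ ×ˢ Icc (-π) π) :=
      continuous_fst.continuousOn.mul
        (((hgradc.comp hmapc.continuousOn hmaps).norm).pow 2)
    exact (hHc.integrableOn_compact hK).mono_set
      (prod_mono Ioo_subset_Icc_self Ioo_subset_Icc_self)
  have hHint' : Integrable H (((volume : Measure ℝ).restrict (Ioo s δ)).prod
      ((volume : Measure ℝ).restrict (Ioo (-π) π))) := by
    rw [Measure.prod_restrict]
    rw [IntegrableOn, Measure.volume_eq_prod] at hHint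
    exact hHint
  have h4 : ∫ p in S, H p = ∫ r in Ioo s δ, ∫ θ in Ioo (-π) π, H (r, θ) := by
    rw [hS, Measure.volume_eq_prod]
    apply setIntegral_prod
    rw [← Measure.volume_eq_prod]
    exact hHint
  have h5 : ∫ r in Ioo s δ, ∫ θ in Ioo (-π) π, H (r, θ)
      = ∫ θ in Ioo (-π) π, ∫ r in Ioo s δ, H (r, θ) :=
    integral_integral_swap hHint'
  -- per-direction bound
  have hper : ∀ θ : ℝ, (a - b) ^ 2 / Real.log (δ / s) ≤ ∫ r in Ioo s δ, H (r, θ) := by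
    intro θ
    exact radial s δ a b hs hsδ hab' Ψ U hU hsub hC1 hinner houter (u θ) (hu1 θ)
  have hinn_int : Integrable (fun θ => ∫ r in Ioo s δ, H (r, θ))
      ((volume : Measure ℝ).restrict (Ioo (-π) π)) :=
    hHint'.integral_prod_right
  have h6 : ∫ θ in Ioo (-π) π, ((a - b) ^ 2 / Real.log (δ / s))
      ≤ ∫ θ in Ioo (-π) π, ∫ r in Ioo s δ, H (r, θ) := by
    apply setIntegral_mono_on (integrableOn_const measure_Ioo_lt_top.ne)
      hinn_int measurableSet_Ioo
    intro θ _
    exact hper θ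
  have h7 : ∫ θ in Ioo (-π) π, ((a - b) ^ 2 / Real.log (δ / s))
      = 2 * π * ((a - b) ^ 2 / Real.log (δ / s)) := by
    rw [setIntegral_const, Real.volume_real_Ioo, smul_eq_mul,
      max_eq_left (by linarith [Real.pi_pos])]
    ring
  have hfinal : 4 * π * (a - b) ^ 2 / (2 * Real.log (δ / s))
      = 2 * π * ((a - b) ^ 2 / Real.log (δ / s)) := by
    field_simp
    ring
  calc 4 * π * (a - b) ^ 2 / (2 * Real.log (δ / s))
      = 2 * π * ((a - b) ^ 2 / Real.log (δ / s)) := hfinal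
    _ ≤ ∫ θ in Ioo (-π) π, ∫ r in Ioo s δ, H (r, θ) := h7 ▸ h6
    _ = ∫ p in S, H p := (h4.trans h5).symm
    _ = ∫ p in polarCoord.target, S.indicator H p := h3.symm
    _ = ∫ x in A, F x := (h1.trans h2).symm
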